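/- Let φ be a Bernstein function that is not identically constant, with φ(∞) = lim_{x→∞} φ(x) possibly infinite. Then for every A > 0, lim_{x→∞} sup_{0 ≤ v ≤ A, y ∈ ℝ} |φ(x + v + iy)/φ(x + iy)| = 1. -/

import Mathlib

/-!
Write `φ` also for its restriction to `(0, ∞)`, and let `z = x + iy` with `x > 0`.
Since `|e^{-zt}| = e^{-xt}`, one has `Re φ(z) ≥ φ(x) > 0`, and
`|e^{-zt} - e^{-(z+v)t}| = e^{-xt} - e^{-(x+v)t}` gives `|φ(z+v) - φ(z)| ≤ φ(x+v) - φ(x)`.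
Concavity of `φ` on `[0, ∞)` bounds the increment by `(v/x) φ(x)`, so
`|φ(z+v)/φ(z)| ≤ 1 + A/x` uniformly in `v ∈ [0, A]` and `y`, while `v = y = 0` gives ratio `1`.
-/

open MeasureTheory Set Filter

theorem mul_exp_sub_exp_le {x v : ℝ} (y : ℝ) (hx : 0 ≤ x) (hv : 0 ≤ v) :
    x * (Real.exp (-(x * y)) - Real.exp (-((x + v) * y))) ≤ v * (1 - Real.exp (-(x * y))) := by
  have hvy : 1 - Real.exp (-(v * y)) ≤ v * y := by linarith [Real.add_one_le_exp (-(v * y))]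
  have hxy : x * y * Real.exp (-(x * y)) ≤ 1 - Real.exp (-(x * y)) := by
    have h := mul_le_mul_of_nonneg_right (Real.add_one_le_exp (x * y)) (Real.exp_pos (-(x * y))).le
    rw [← Real.exp_add, add_neg_cancel, Real.exp_zero] at h
    linarith
  have hsplit : Real.exp (-((x + v) * y)) = Real.exp (-(x * y)) * Real.exp (-(v * y)) := by
    rw [← Real.exp_add]; ring_nf
  calc x * (Real.exp (-(x * y)) - Real.exp (-((x + v) * y)))
      = x * Real.exp (-(x * y)) * (1 - Real.exp (-(v * y))) := by rw [hsplit]; ring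
    _ ≤ x * Real.exp (-(x * y)) * (v * y) := by gcongr
    _ = v * (x * y * Real.exp (-(x * y))) := by ring
    _ ≤ v * (1 - Real.exp (-(x * y))) := by gcongr

theorem norm_cexp_sub_cexp_add {z : ℂ} {v y : ℝ} (hv : 0 ≤ v) (hy : 0 ≤ y) :
    ‖Complex.exp (-(z * y)) - Complex.exp (-((z + v) * y))‖
      = Real.exp (-(z.re * y)) - Real.exp (-((z.re + v) * y)) := by
  have hsplit : Complex.exp (-((z + v) * y)) = Complex.exp (-(z * y)) * Real.exp (-(v * y)) := by
    rw [Complex.ofReal_exp, ← Complex.exp_add]; push_cast; ring_nf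
  have hle : Real.exp (-(v * y)) ≤ 1 := Real.exp_le_one_iff.mpr (by nlinarith)
  rw [hsplit, ← mul_one_sub, norm_mul, Complex.norm_exp, ← Complex.ofReal_one,
    ← Complex.ofReal_sub, Complex.norm_real, Real.norm_of_nonneg (by linarith)]
  have : Real.exp (-((z.re + v) * y)) = Real.exp (-(z.re * y)) * Real.exp (-(v * y)) := by
    rw [← Real.exp_add]; ring_nf
  rw [this]
  simp only [Complex.neg_re, Complex.mul_re, Complex.ofReal_re, Complex.ofReal_im, mul_zero,
    sub_zero]
  ring

noncomputable def bernsteinFun (q d : ℝ) (μ : Measure ℝ) (z : ℂ) : ℂ :=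
  q + d * z + ∫ y in Ioi (0:ℝ), (1 - Complex.exp (-(z * y))) ∂μ

noncomputable def bernsteinFunReal (q d : ℝ) (μ : Measure ℝ) (x : ℝ) : ℝ :=
  q + d * x + ∫ y in Ioi (0:ℝ), (1 - Real.exp (-(x * y))) ∂μ

def BernsteinIntegrable (μ : Measure ℝ) : Prop :=
  ∀ z : ℂ, 0 < z.re → IntegrableOn (fun y : ℝ => 1 - Complex.exp (-(z * y))) (Ioi 0) μ

section
variable {q d : ℝ} {μ : Measure ℝ}

theorem BernsteinIntegrable.integrableOn_one_sub_rexp (hμ : BernsteinIntegrable μ) {x : ℝ}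
    (hx : 0 < x) : IntegrableOn (fun y => 1 - Real.exp (-(x * y))) (Ioi 0) μ := by
  refine (hμ x (by simpa using hx)).re.congr (Eventually.of_forall fun y => ?_)
  simp [← Complex.ofReal_mul, ← Complex.ofReal_neg, ← Complex.ofReal_exp]

theorem bernsteinFunReal_le_re (hμ : BernsteinIntegrable μ) {z : ℂ} (hz : 0 < z.re) :
    bernsteinFunReal q d μ z.re ≤ (bernsteinFun q d μ z).re := by
  have hre : (∫ y in Ioi (0:ℝ), (1 - Complex.exp (-(z * y))) ∂μ).re
      = ∫ y in Ioi (0:ℝ), (1 - Complex.exp (-(z * y))).re ∂μ :=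
    (integral_re (hμ z hz)).symm
  have hmono : ∫ y in Ioi (0:ℝ), (1 - Real.exp (-(z.re * y))) ∂μ
      ≤ ∫ y in Ioi (0:ℝ), (1 - Complex.exp (-(z * y))).re ∂μ := by
    refine setIntegral_mono_on (hμ.integrableOn_one_sub_rexp hz) (hμ z hz).re measurableSet_Ioi
      fun y _ => ?_
    have : (Complex.exp (-(z * y))).re ≤ Real.exp (-(z.re * y)) := by
      calc _ ≤ ‖Complex.exp (-(z * y))‖ := Complex.re_le_norm _
        _ = _ := by simp [Complex.norm_exp]
    simp only [Complex.sub_re, Complex.one_re]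
    linarith
  simp only [bernsteinFun, bernsteinFunReal, Complex.add_re, Complex.ofReal_re, Complex.mul_re,
    Complex.ofReal_im, hre]
  linarith

theorem bernsteinFunReal_pos (hq : 0 ≤ q) (hd : 0 ≤ d) (hnc : 0 < d ∨ 0 < μ (Ioi 0))
    (hμ : BernsteinIntegrable μ) {x : ℝ} (hx : 0 < x) : 0 < bernsteinFunReal q d μ x := by
  have hpos : ∀ y ∈ Ioi (0:ℝ), 0 < 1 - Real.exp (-(x * y)) := fun y hy => by
    have : Real.exp (-(x * y)) < 1 := Real.exp_lt_one_iff.mpr (by nlinarith [hy.out])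
    linarith
  have hI : 0 ≤ ∫ y in Ioi (0:ℝ), (1 - Real.exp (-(x * y))) ∂μ :=
    setIntegral_nonneg measurableSet_Ioi fun y hy => (hpos y hy).le
  unfold bernsteinFunReal
  rcases hnc with hd_pos | hμ0
  · nlinarith [mul_pos hd_pos hx]
  · have : 0 < ∫ y in Ioi (0:ℝ), (1 - Real.exp (-(x * y))) ∂μ := by
      rw [setIntegral_pos_iff_support_of_nonneg_ae
        ((ae_restrict_iff' measurableSet_Ioi).mpr (.of_forall fun y hy => (hpos y hy).le))
        (hμ.integrableOn_one_sub_rexp hx)]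
      exact hμ0.trans_le (measure_mono fun y hy => ⟨(hpos y hy).ne', hy⟩)
    nlinarith [mul_nonneg hd hx.le]

theorem BernsteinIntegrable.integrableOn_exp_sub_exp (hμ : BernsteinIntegrable μ) {x v : ℝ}
    (hx : 0 < x) (hv : 0 ≤ v) :
    IntegrableOn (fun y => Real.exp (-(x * y)) - Real.exp (-((x + v) * y))) (Ioi 0) μ :=
  ((hμ.integrableOn_one_sub_rexp (add_pos_of_pos_of_nonneg hx hv)).sub
    (hμ.integrableOn_one_sub_rexp hx)).congr (.of_forall fun y => by simp only [Pi.sub_apply]; ring)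

theorem bernsteinFunReal_add_sub (hμ : BernsteinIntegrable μ) {x v : ℝ} (hx : 0 < x)
    (hv : 0 ≤ v) :
    bernsteinFunReal q d μ (x + v) - bernsteinFunReal q d μ x
      = d * v + ∫ y in Ioi (0:ℝ), (Real.exp (-(x * y)) - Real.exp (-((x + v) * y))) ∂μ := by
  have h : ∫ y in Ioi (0:ℝ), (Real.exp (-(x * y)) - Real.exp (-((x + v) * y))) ∂μ
      = ∫ y in Ioi (0:ℝ), (1 - Real.exp (-((x + v) * y))) ∂μ
        - ∫ y in Ioi (0:ℝ), (1 - Real.exp (-(x * y))) ∂μ := by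
    rw [← integral_sub (hμ.integrableOn_one_sub_rexp (add_pos_of_pos_of_nonneg hx hv))
      (hμ.integrableOn_one_sub_rexp hx)]
    congr 1 with y
    ring
  rw [h, bernsteinFunReal, bernsteinFunReal]
  ring

theorem bernsteinFun_add_sub (hμ : BernsteinIntegrable μ) {z : ℂ} (hz : 0 < z.re) {v : ℝ}
    (hv : 0 ≤ v) :
    bernsteinFun q d μ (z + v) - bernsteinFun q d μ z
      = d * v + ∫ y in Ioi (0:ℝ), (Complex.exp (-(z * y)) - Complex.exp (-((z + v) * y))) ∂μ := by
  have hzv : 0 < (z + v).re := by simpa using add_pos_of_pos_of_nonneg hz hv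
  have h : ∫ y in Ioi (0:ℝ), (Complex.exp (-(z * y)) - Complex.exp (-((z + v) * y))) ∂μ
      = ∫ y in Ioi (0:ℝ), (1 - Complex.exp (-((z + v) * y))) ∂μ
        - ∫ y in Ioi (0:ℝ), (1 - Complex.exp (-(z * y))) ∂μ := by
    rw [← integral_sub (hμ _ hzv) (hμ z hz)]
    congr 1 with y
    ring
  rw [h, bernsteinFun, bernsteinFun]
  ring

theorem norm_bernsteinFun_add_sub_le (hd : 0 ≤ d) (hμ : BernsteinIntegrable μ) {z : ℂ}
    (hz : 0 < z.re) {v : ℝ} (hv : 0 ≤ v) :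
    ‖bernsteinFun q d μ (z + v) - bernsteinFun q d μ z‖
      ≤ bernsteinFunReal q d μ (z.re + v) - bernsteinFunReal q d μ z.re := by
  rw [bernsteinFun_add_sub hμ hz hv, bernsteinFunReal_add_sub hμ hz hv]
  refine (norm_add_le _ _).trans (add_le_add ?_ ?_)
  · simp [abs_of_nonneg hd, abs_of_nonneg hv]
  · refine (norm_integral_le_integral_norm _).trans_eq
      (setIntegral_congr_fun measurableSet_Ioi fun y hy => ?_)
    exact norm_cexp_sub_cexp_add hv (le_of_lt hy)

-- Slope comparison for the concave function `bernsteinFunReal` on `[0, x]` and `[x, x + v]`.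
theorem mul_bernsteinFunReal_add_sub_le (hq : 0 ≤ q) (hμ : BernsteinIntegrable μ) {x v : ℝ}
    (hx : 0 < x) (hv : 0 ≤ v) :
    x * (bernsteinFunReal q d μ (x + v) - bernsteinFunReal q d μ x)
      ≤ v * bernsteinFunReal q d μ x := by
  have hI : x * ∫ y in Ioi (0:ℝ), (Real.exp (-(x * y)) - Real.exp (-((x + v) * y))) ∂μ
      ≤ v * ∫ y in Ioi (0:ℝ), (1 - Real.exp (-(x * y))) ∂μ := by
    rw [← integral_const_mul, ← integral_const_mul]
    exact setIntegral_mono_on ((hμ.integrableOn_exp_sub_exp hx hv).const_mul x)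
      ((hμ.integrableOn_one_sub_rexp hx).const_mul v) measurableSet_Ioi
      fun y _ => mul_exp_sub_exp_le y hx.le hv
  rw [bernsteinFunReal_add_sub hμ hx hv, bernsteinFunReal]
  nlinarith [mul_nonneg hv hq]

theorem bernsteinFun_ne_zero (hq : 0 ≤ q) (hd : 0 ≤ d) (hnc : 0 < d ∨ 0 < μ (Ioi 0))
    (hμ : BernsteinIntegrable μ) {z : ℂ} (hz : 0 < z.re) : bernsteinFun q d μ z ≠ 0 := by
  have h := (bernsteinFunReal_pos hq hd hnc hμ hz).trans_le (bernsteinFunReal_le_re hμ hz)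
  exact fun h0 => by simp [h0] at h

theorem norm_bernsteinFun_add_div_le (hq : 0 ≤ q) (hd : 0 ≤ d) (hnc : 0 < d ∨ 0 < μ (Ioi 0))
    (hμ : BernsteinIntegrable μ) {z : ℂ} (hz : 0 < z.re) {v : ℝ} (hv : 0 ≤ v) :
    ‖bernsteinFun q d μ (z + v) / bernsteinFun q d μ z‖ ≤ 1 + v / z.re := by
  have hψF : bernsteinFunReal q d μ z.re ≤ ‖bernsteinFun q d μ z‖ :=
    (bernsteinFunReal_le_re hμ hz).trans (Complex.re_le_norm _)
  have hF : 0 < ‖bernsteinFun q d μ z‖ := (bernsteinFunReal_pos hq hd hnc hμ hz).trans_le hψF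
  have hinc : ‖bernsteinFun q d μ (z + v) - bernsteinFun q d μ z‖
      ≤ v / z.re * ‖bernsteinFun q d μ z‖ := by
    calc _ ≤ bernsteinFunReal q d μ (z.re + v) - bernsteinFunReal q d μ z.re :=
          norm_bernsteinFun_add_sub_le hd hμ hz hv
      _ ≤ v / z.re * bernsteinFunReal q d μ z.re := by
          rw [div_mul_eq_mul_div, le_div_iff₀ hz]
          linarith [mul_bernsteinFunReal_add_sub_le (d := d) hq hμ hz hv]
      _ ≤ v / z.re * ‖bernsteinFun q d μ z‖ := by gcongr
  rw [norm_div, div_le_iff₀ hF]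
  linarith [norm_le_norm_add_norm_sub' (bernsteinFun q d μ (z + v)) (bernsteinFun q d μ z)]

end

section
variable {ι κ : Type*} {s : Set ι} {f : ι → κ → ℝ} {b : ℝ}

theorem Real.biSup_iSup_le (hb : 0 ≤ b) (h : ∀ i ∈ s, ∀ k, f i k ≤ b) :
    ⨆ i ∈ s, ⨆ k, f i k ≤ b :=
  Real.iSup_le (fun i => Real.iSup_le (fun hi => Real.iSup_le (h i hi) hb) hb) hb

theorem Real.le_biSup_iSup (hb : 0 ≤ b) (h : ∀ i ∈ s, ∀ k, f i k ≤ b) {i : ι} (hi : i ∈ s)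
    (k : κ) : f i k ≤ ⨆ i ∈ s, ⨆ k, f i k := by
  have hbdd : ∀ j, ⨆ (_ : j ∈ s), ⨆ k, f j k ≤ b := fun j =>
    Real.iSup_le (fun hj => Real.iSup_le (h j hj) hb) hb
  calc f i k ≤ ⨆ k, f i k := le_ciSup ⟨b, by rintro _ ⟨k, rfl⟩; exact h i hi k⟩ k
    _ = ⨆ (_ : i ∈ s), ⨆ k, f i k := (ciSup_pos (f := fun _ => ⨆ k, f i k) hi).symm
    _ ≤ _ := le_ciSup ⟨b, by rintro _ ⟨j, rfl⟩; exact hbdd j⟩ i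

end

theorem bernstein_ratio_sup_tendsto_one_general
    (q d : ℝ) (hq : 0 ≤ q) (hd : 0 ≤ d)
    (μ : Measure ℝ)
    (hnc : 0 < d ∨ 0 < μ (Set.Ioi (0:ℝ)))
    (φ : ℂ → ℂ)
    (hφ : ∀ z : ℂ, 0 < z.re →
      φ z = (q : ℂ) + (d : ℂ) * z
        + ∫ y in Set.Ioi (0:ℝ), (1 - Complex.exp (-(z * (y : ℂ)))) ∂μ)
    (hint : ∀ z : ℂ, 0 < z.re →
      IntegrableOn (fun y : ℝ => 1 - Complex.exp (-(z * (y : ℂ)))) (Set.Ioi 0) μ) :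
    ∀ A : ℝ, 0 < A →
      Tendsto
        (fun x : ℝ =>
          ⨆ v ∈ Set.Icc (0:ℝ) A, ⨆ y : ℝ,
            ‖φ ((x : ℂ) + (v : ℂ) + (y : ℂ) * Complex.I)
              / φ ((x : ℂ) + (y : ℂ) * Complex.I)‖)
        atTop (nhds 1) := by
  intro A hA
  have hφ' : ∀ z : ℂ, 0 < z.re → φ z = bernsteinFun q d μ z := hφ
  have hre : ∀ x y : ℝ, ((x : ℂ) + (y : ℂ) * Complex.I).re = x := by simp
  have hratio : ∀ x : ℝ, 0 < x → ∀ v ∈ Icc (0:ℝ) A, ∀ y : ℝ,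
      ‖φ ((x : ℂ) + (v : ℂ) + (y : ℂ) * Complex.I) / φ ((x : ℂ) + (y : ℂ) * Complex.I)‖
        ≤ 1 + A / x := by
    intro x hx v hv y
    have hz : 0 < ((x : ℂ) + (y : ℂ) * Complex.I).re := (hre x y).symm ▸ hx
    rw [add_right_comm, hφ' _ (by simpa using add_pos_of_pos_of_nonneg hx hv.1), hφ' _ hz]
    calc _ ≤ 1 + v / ((x : ℂ) + (y : ℂ) * Complex.I).re :=
          norm_bernsteinFun_add_div_le hq hd hnc hint hz hv.1
      _ ≤ 1 + A / x := by rw [hre]; gcongr; exact hv.2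
  have hone : ∀ x : ℝ, 0 < x → ‖φ ((x : ℂ) + ((0 : ℝ) : ℂ) + ((0 : ℝ) : ℂ) * Complex.I)
      / φ ((x : ℂ) + ((0 : ℝ) : ℂ) * Complex.I)‖ = 1 := by
    intro x hx
    have hz : 0 < (x : ℂ).re := by simpa using hx
    have hne : φ x ≠ 0 := hφ' x hz ▸ bernsteinFun_ne_zero hq hd hnc hint hz
    simp [hne]
  have hlim : Tendsto (fun x : ℝ => 1 + A / x) atTop (nhds 1) := by
    simpa using (tendsto_const_nhds (x := (1:ℝ))).add (tendsto_const_nhds.div_atTop tendsto_id)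
  refine tendsto_of_tendsto_of_tendsto_of_le_of_le' tendsto_const_nhds hlim ?_ ?_ <;>
    filter_upwards [eventually_gt_atTop 0] with x hx
  · exact (hone x hx).symm.le.trans
      (Real.le_biSup_iSup (by positivity) (hratio x hx) ⟨le_rfl, hA.le⟩ 0)
  · exact Real.biSup_iSup_le (by positivity) (hratio x hx)

theorem bernstein_ratio_sup_tendsto_one
    (q d : ℝ) (hq : 0 ≤ q) (hd : 0 ≤ d)
    (μ : Measure ℝ)
    (hμ : ∫⁻ y in Set.Ioi (0:ℝ), ENNReal.ofReal (min y 1) ∂μ < ⊤)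
    (hnc : 0 < d ∨ 0 < μ (Set.Ioi (0:ℝ)))
    (φ : ℂ → ℂ)
    (hφ : ∀ z : ℂ, 0 < z.re →
      φ z = (q : ℂ) + (d : ℂ) * z
        + ∫ y in Set.Ioi (0:ℝ), (1 - Complex.exp (-(z * (y : ℂ)))) ∂μ)
    (hint : ∀ z : ℂ, 0 < z.re →
      IntegrableOn (fun y : ℝ => 1 - Complex.exp (-(z * (y : ℂ)))) (Set.Ioi 0) μ) :
    ∀ A : ℝ, 0 < A →
      Tendsto
        (fun x : ℝ =>
          ⨆ v ∈ Set.Icc (0:ℝ) A, ⨆ y : ℝ,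
            ‖φ ((x : ℂ) + (v : ℂ) + (y : ℂ) * Complex.I)
              / φ ((x : ℂ) + (y : ℂ) * Complex.I)‖)
        atTop (nhds 1) :=
  bernstein_ratio_sup_tendsto_one_general q d hq hd μ hnc φ hφ hint
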